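/- arXiv:1908.09901 — 2 statements merged into one kernel-verified Lean document; each statement's English description precedes it below -/
import Mathlib

section
/- If S is an uncountable subset of a tree T of height ω₁ that is ω₁-compact in the subspace topology and avoids a club set of levels of its downward closure S↓, then a contradiction arises; equivalently, S intersects a stationary set of levels of S↓. -/
open Set Topology Cardinal Ordinal

universe u v

/-- The order (interval) topology of a tree. -/
def treeTopology (T : Type u) [PartialOrder T] : TopologicalSpace T :=
  TopologicalSpace.generateFrom
    ({s | ∃ a b : T, a < b ∧ s = Set.Ioc a b} ∪
     {s | ∃ b : T, (∀ a : T, ¬a < b) ∧ s = {b}})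

/-- A tree order: the predecessors of every element are well-ordered. -/
def IsTreeOrder (T : Type u) [PartialOrder T] : Prop :=
  ∀ x : T, IsWellOrder {y : T // y < x} (· < ·)

/-- The height of an element: the order type of its set of predecessors. -/
noncomputable def treeHeight {T : Type u} [PartialOrder T] (hT : IsTreeOrder T) (x : T) :
    Ordinal.{u} :=
  @Ordinal.type {y : T // y < x} (· < ·) (hT x)

/-- Hausdorff tree: elements at limit levels are determined by their predecessors. -/
def IsHausdorffTree (T : Type u) [PartialOrder T] : Prop :=
  ∀ x y : T, Set.Iio x = Set.Iio y → (Set.Iio x).Nonempty →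
    (∀ z ∈ Set.Iio x, ∃ w ∈ Set.Iio x, z < w) → x = y

/-- The tree has height ω₁. -/
def HasHeightOmega1 {T : Type u} [PartialOrder T] (hT : IsTreeOrder T) : Prop :=
  (∀ x : T, treeHeight hT x < ω₁) ∧ ∀ α < ω₁, ∃ x : T, treeHeight hT x = α

/-- Downward closure of a subset of a tree. -/
def downClosure {T : Type u} [PartialOrder T] (S : Set T) : Set T := {x | ∃ y ∈ S, x ≤ y}

/-- `D` is a closed discrete subset of the subspace `S`. -/
def ClosedDiscreteIn {T : Type u} [TopologicalSpace T] (D S : Set T) : Prop :=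
  D ⊆ S ∧ closure D ∩ S ⊆ D ∧ ∀ x ∈ D, ∃ U : Set T, IsOpen U ∧ x ∈ U ∧ U ∩ D = {x}

/-- `S` is ω₁-compact in the subspace topology: every closed discrete subset is countable. -/
def OmegaOneCompactIn {T : Type u} [TopologicalSpace T] (S : Set T) : Prop :=
  ∀ D : Set T, ClosedDiscreteIn D S → D.Countable

/-- A club (closed unbounded) subset of `ω₁` (as a set of ordinals, with the order topology). -/
def IsClubBelowOmega1 (C : Set Ordinal.{u}) : Prop :=
  C ⊆ Set.Iio ω₁ ∧ (∀ α < ω₁, ∃ β ∈ C, α ≤ β) ∧ ∀ α < ω₁, α ∈ closure C → α ∈ C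

/-- A stationary subset of `ω₁`. -/
def IsStationaryBelowOmega1 (S : Set Ordinal.{u}) : Prop :=
  S ⊆ Set.Iio ω₁ ∧ ∀ C : Set Ordinal.{u}, IsClubBelowOmega1 C → (S ∩ C).Nonempty


/-!
Suppose a club `C` misses every level of `S`. Levels of a tree are closed discrete, so every
level of `S` is countable. For `x ∈ S` let `g x` be the supremum of the points of `C` below the
height of `x`; since `C` is closed and misses the height of `x`, `g x` is strictly below it. The
points of `S` that are the first ones on their branch above `g` form a closed discrete, hence
countable, subset `D` of `S`. Every `x ∈ S` has the same `g`-value as some point of `D`, and each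
fibre of `g` on `S` lies below the next point of `C`, so it meets only countably many levels.
Hence `S` is countable.
-/

lemma Ordinal.countable_Iio_of_lt_omega_one {β : Ordinal.{u}} (hβ : β < ω₁) :
    (Iio β).Countable := by
  rwa [← le_aleph0_iff_set_countable, Cardinal.mk_Iio_ordinal, lift_le_aleph0,
    ← lt_aleph_one_iff, ← lt_ord, ord_aleph]

lemma closedDiscreteIn_of_forall_exists_isOpen {X : Type*} [TopologicalSpace X] {D S : Set X}
    (hDS : D ⊆ S) (h : ∀ x ∈ S, ∃ U, IsOpen U ∧ x ∈ U ∧ U ∩ D ⊆ {x}) :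
    ClosedDiscreteIn D S := by
  refine ⟨hDS, ?_, fun x hx => ?_⟩
  · rintro x ⟨hxD, hxS⟩
    obtain ⟨U, hU, hxU, hUD⟩ := h x hxS
    obtain ⟨y, hyU, hyD⟩ := mem_closure_iff.1 hxD U hU hxU
    rwa [← hUD ⟨hyU, hyD⟩]
  · obtain ⟨U, hU, hxU, hUD⟩ := h x (hDS hx)
    exact ⟨U, hU, hxU, hUD.antisymm (singleton_subset_iff.2 ⟨hxU, hx⟩)⟩

section SupBelow

variable {α : Type*} [ConditionallyCompleteLinearOrderBot α]

def supBelow (C : Set α) (a : α) : α :=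
  sSup (C ∩ Iio a)

lemma bddAbove_inter_Iio (C : Set α) (a : α) : BddAbove (C ∩ Iio a) :=
  ⟨a, fun _ hb => hb.2.le⟩

lemma supBelow_le (C : Set α) (a : α) : supBelow C a ≤ a :=
  csSup_le' fun _ hb => hb.2.le

lemma le_supBelow {C : Set α} {a b : α} (hb : b ∈ C) (hba : b < a) : b ≤ supBelow C a :=
  le_csSup (bddAbove_inter_Iio C a) ⟨hb, hba⟩

lemma supBelow_mono (C : Set α) : Monotone (supBelow C) := fun _ _ hab =>
  csSup_le_csSup' (bddAbove_inter_Iio C _) (inter_subset_inter_right C (Iio_subset_Iio hab))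

lemma supBelow_eq_of_supBelow_lt {C : Set α} {a b : α} (hba : b ≤ a) (h : supBelow C a < b) :
    supBelow C b = supBelow C a :=
  (supBelow_mono C hba).antisymm <| csSup_le_csSup' (bddAbove_inter_Iio C b)
    fun _ hc => ⟨hc.1, (le_supBelow hc.1 hc.2).trans_lt h⟩

lemma supBelow_lt [TopologicalSpace α] [OrderTopology α] {C : Set α} {a : α} (ha : ⊥ < a)
    (haC : a ∉ closure C) : supBelow C a < a := by
  rcases (C ∩ Iio a).eq_empty_or_nonempty with hempty | hne
  · rwa [supBelow, hempty, csSup_empty]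
  · refine (supBelow_le C a).lt_of_ne fun h => haC ?_
    rw [← h]
    exact closure_mono inter_subset_left (csSup_mem_closure hne (bddAbove_inter_Iio C a))

end SupBelow

section Tree

variable {T : Type u} [PartialOrder T] (hT : IsTreeOrder T)

lemma treeHeight_eq_typein {x y : T} (h : y < x) :
    treeHeight hT y = @Ordinal.typein {z : T // z < x} (· < ·) (hT x) ⟨y, h⟩ := by
  have := hT x
  have := hT y
  rw [← @Ordinal.type_subrel {z : T // z < x} (· < ·) _ ⟨y, h⟩]
  exact Ordinal.type_eq.2 ⟨RelIso.mk (Equiv.mk (fun z => ⟨⟨z.1, z.2.trans h⟩, z.2⟩)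
    (fun w => ⟨w.1.1, w.2⟩) (fun _ => rfl) (fun _ => rfl)) Iff.rfl⟩

lemma treeHeight_strictMono : StrictMono (treeHeight hT) := fun y x h => by
  rw [treeHeight_eq_typein hT h]
  exact @Ordinal.typein_lt_type _ (· < ·) (hT x) ⟨y, h⟩

lemma exists_lt_treeHeight_eq {x : T} {δ : Ordinal.{u}} (h : δ < treeHeight hT x) :
    ∃ a < x, treeHeight hT a = δ := by
  have := hT x
  obtain ⟨a, ha⟩ := @Ordinal.typein_surj {z : T // z < x} (· < ·) _ _ h
  exact ⟨a.1, a.2, by rw [treeHeight_eq_typein hT a.2, ← ha]⟩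

lemma eq_of_le_of_treeHeight_le {x y : T} (hyx : y ≤ x)
    (h : treeHeight hT x ≤ treeHeight hT y) : y = x :=
  hyx.eq_of_not_lt fun hlt => (treeHeight_strictMono hT hlt).not_ge h

attribute [local instance] treeTopology

lemma isOpen_Ioc_of_lt {a x : T} (h : a < x) : IsOpen (Ioc a x) :=
  TopologicalSpace.isOpen_generateFrom_of_mem (Or.inl ⟨a, x, h, rfl⟩)

lemma isOpen_singleton_of_forall_not_lt {x : T} (h : ∀ a, ¬a < x) : IsOpen {x} :=
  TopologicalSpace.isOpen_generateFrom_of_mem (Or.inr ⟨x, h, rfl⟩)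

lemma exists_isOpen_mem_forall_le_and_lt_treeHeight {x : T} {δ : Ordinal.{u}}
    (hδ : δ < treeHeight hT x) :
    ∃ U, IsOpen U ∧ x ∈ U ∧ ∀ y ∈ U, y ≤ x ∧ δ < treeHeight hT y := by
  obtain ⟨a, hax, rfl⟩ := exists_lt_treeHeight_eq hT hδ
  exact ⟨Ioc a x, isOpen_Ioc_of_lt hax, ⟨hax, le_rfl⟩,
    fun y hy => ⟨hy.2, treeHeight_strictMono hT hy.1⟩⟩

lemma exists_isOpen_mem_subset_Iic (hT : IsTreeOrder T) (x : T) :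
    ∃ U, IsOpen U ∧ x ∈ U ∧ U ⊆ Iic x := by
  rcases eq_zero_or_pos (treeHeight hT x) with h0 | hpos
  · refine ⟨{x}, isOpen_singleton_of_forall_not_lt fun a ha => ?_, rfl, by simp⟩
    exact zero_le.not_gt (h0 ▸ treeHeight_strictMono hT ha)
  · obtain ⟨U, hU, hxU, hUx⟩ := exists_isOpen_mem_forall_le_and_lt_treeHeight hT hpos
    exact ⟨U, hU, hxU, fun y hy => (hUx y hy).1⟩

lemma closedDiscreteIn_level (S : Set T) (α : Ordinal.{u}) :
    ClosedDiscreteIn {x | x ∈ S ∧ treeHeight hT x = α} S := by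
  refine closedDiscreteIn_of_forall_exists_isOpen (fun x hx => hx.1) fun x _ => ?_
  rcases le_or_gt (treeHeight hT x) α with hle | hlt
  · obtain ⟨U, hU, hxU, hUx⟩ := exists_isOpen_mem_subset_Iic hT x
    exact ⟨U, hU, hxU, fun y ⟨hyU, _, hy⟩ =>
      eq_of_le_of_treeHeight_le hT (hUx hyU) (hy ▸ hle)⟩
  · obtain ⟨U, hU, hxU, hUx⟩ := exists_isOpen_mem_forall_le_and_lt_treeHeight hT hlt
    exact ⟨U, hU, hxU, fun y ⟨hyU, _, hy⟩ => absurd hy (hUx y hyU).2.ne'⟩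

variable (C : Set Ordinal.{u}) (S : Set T)

/-- `x ∈ S` comes first on its branch among the points of `S` above `supBelow C` of its height. -/
def clubBlockMinimals : Set T :=
  {x | x ∈ S ∧ ∀ y ∈ S, y < x → treeHeight hT y ≤ supBelow C (treeHeight hT x)}

variable {C S}

lemma exists_mem_clubBlockMinimals {x : T} (hx : x ∈ S) :
    ∃ d ∈ clubBlockMinimals hT C S,
      supBelow C (treeHeight hT d) = supBelow C (treeHeight hT x) := by
  obtain ⟨d, ⟨hdS, hdx, hgd⟩, hmin⟩ := (InvImage.wf (treeHeight hT) Ordinal.lt_wf).has_min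
    {y | y ∈ S ∧ y ≤ x ∧ supBelow C (treeHeight hT y) = supBelow C (treeHeight hT x)}
    ⟨x, hx, le_rfl, rfl⟩
  refine ⟨d, ⟨hdS, fun y hyS hyd => not_lt.1 fun hlt => hmin y ⟨hyS, hyd.le.trans hdx, ?_⟩
    (treeHeight_strictMono hT hyd)⟩, hgd⟩
  rw [supBelow_eq_of_supBelow_lt (treeHeight_strictMono hT hyd).le hlt, hgd]

lemma closedDiscreteIn_clubBlockMinimals (hSC : ∀ x ∈ S, treeHeight hT x ∉ closure C) :
    ClosedDiscreteIn (clubBlockMinimals hT C S) S := by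
  refine closedDiscreteIn_of_forall_exists_isOpen (fun x hx => hx.1) fun x hxS => ?_
  by_cases hxD : x ∈ clubBlockMinimals hT C S
  · rcases eq_zero_or_pos (treeHeight hT x) with h0 | hpos
    · obtain ⟨U, hU, hxU, hUx⟩ := exists_isOpen_mem_subset_Iic hT x
      exact ⟨U, hU, hxU, fun y hy => eq_of_le_of_treeHeight_le hT (hUx hy.1) (h0 ▸ zero_le)⟩
    · obtain ⟨U, hU, hxU, hUx⟩ := exists_isOpen_mem_forall_le_and_lt_treeHeight hT
        (supBelow_lt (Ordinal.bot_eq_zero ▸ hpos) (hSC x hxS))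
      exact ⟨U, hU, hxU, fun y ⟨hyU, hyD⟩ => (hUx y hyU).1.eq_of_not_lt fun hyx =>
        ((hxD.2 y hyD.1 hyx).trans_lt (hUx y hyU).2).false⟩
  · obtain ⟨y, hyS, hyx, hy⟩ :
        ∃ y ∈ S, y < x ∧ supBelow C (treeHeight hT x) < treeHeight hT y := by
      simpa [clubBlockMinimals, hxS] using hxD
    refine ⟨Ioc y x, isOpen_Ioc_of_lt hyx, ⟨hyx, le_rfl⟩, fun d ⟨hdU, hdD⟩ => ?_⟩
    refine hdU.2.eq_of_not_lt fun hdx => hy.not_ge ?_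
    exact (hdD.2 y hyS hdU.1).trans (supBelow_mono C (treeHeight_strictMono hT hdx).le)

lemma countable_supBelow_fiber (hlev : ∀ α, {x | x ∈ S ∧ treeHeight hT x = α}.Countable)
    (hSC : ∀ x ∈ S, treeHeight hT x ∉ C) {β δ : Ordinal.{u}} (hβC : β ∈ C) (hβ : β < ω₁)
    (hδβ : δ < β) : {x | x ∈ S ∧ supBelow C (treeHeight hT x) = δ}.Countable := by
  have hsub : {x | x ∈ S ∧ supBelow C (treeHeight hT x) = δ} ⊆
      ⋃ α ∈ Iio β, {x | x ∈ S ∧ treeHeight hT x = α} := fun x ⟨hxS, hx⟩ => by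
    refine mem_biUnion (show treeHeight hT x < β from ?_) ⟨hxS, rfl⟩
    refine lt_of_not_ge fun hβx => hβx.lt_or_eq.elim (fun hlt => ?_) fun heq => ?_
    · exact (le_supBelow hβC hlt).not_gt (hx ▸ hδβ)
    · exact hSC x hxS (heq ▸ hβC)
  exact ((countable_Iio_of_lt_omega_one hβ).biUnion fun α _ => hlev α).mono hsub

lemma countable_of_omegaOneCompactIn_of_club_disjoint (hht : ∀ x, treeHeight hT x < ω₁)
    (hSc : OmegaOneCompactIn S) (hC : IsClubBelowOmega1 C)
    (hSC : ∀ x ∈ S, treeHeight hT x ∉ C) : S.Countable := by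
  obtain ⟨hCω, hCunb, hCcl⟩ := hC
  have hlev α := hSc _ (closedDiscreteIn_level hT S α)
  have hD := hSc _ (closedDiscreteIn_clubBlockMinimals hT
    fun x hx hcl => hSC x hx (hCcl _ (hht x) hcl))
  have hcover : S ⊆ ⋃ d ∈ clubBlockMinimals hT C S,
      {x | x ∈ S ∧ supBelow C (treeHeight hT x) = supBelow C (treeHeight hT d)} :=
    fun x hx => by
    obtain ⟨d, hd, hdx⟩ := exists_mem_clubBlockMinimals hT hx
    exact mem_biUnion hd ⟨hx, hdx.symm⟩
  refine (hD.biUnion fun d _ => ?_).mono hcover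
  have hδ := (supBelow_le C (treeHeight hT d)).trans_lt (hht d)
  obtain ⟨β, hβC, hδβ⟩ := hCunb _ ((isSuccLimit_omega 1).succ_lt hδ)
  exact countable_supBelow_fiber hT hlev hSC hβC (hCω hβC) (Order.succ_le_iff.1 hδβ)

end Tree

theorem stationary_levels_of_omegaOneCompact_general {T : Type u} [PartialOrder T]
    [tT : TopologicalSpace T] (htop : tT = treeTopology T)
    (hT : IsTreeOrder T) (hht : HasHeightOmega1 hT)
    (S : Set T) (hSu : ¬S.Countable) (hSc : OmegaOneCompactIn S) :
    IsStationaryBelowOmega1 {α : Ordinal.{u} | ∃ x ∈ S, treeHeight hT x = α} := by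
  subst htop
  refine ⟨fun α ⟨x, _, hx⟩ => hx ▸ hht.1 x, fun C hC => ?_⟩
  by_contra hdisj
  exact hSu (countable_of_omegaOneCompactIn_of_club_disjoint hT hht.1 hSc hC
    fun x hxS hxC => hdisj ⟨_, ⟨x, hxS, rfl⟩, hxC⟩)

/-- An uncountable ω₁-compact subset S of a (Hausdorff) tree of height ω₁
intersects a stationary set of levels of its downward closure S↓ (whose levels are the
levels of T intersected with S↓). -/
theorem stationary_levels_of_omegaOneCompact {T : Type u} [PartialOrder T]
    [tT : TopologicalSpace T] (htop : tT = treeTopology T)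
    (hT : IsTreeOrder T) (hH : IsHausdorffTree T) (hht : HasHeightOmega1 hT)
    (S : Set T) (hSu : ¬S.Countable) (hSc : OmegaOneCompactIn S) :
    IsStationaryBelowOmega1 {α : Ordinal.{u} | ∃ x ∈ S, treeHeight hT x = α} :=
  stationary_levels_of_omegaOneCompact_general (tT := tT) htop hT hht S hSu hSc
end

section
/- A closed discrete subset of a tree (with the order topology) is a union of at most countably many antichains. -/
open Set Topology Cardinal Ordinal

universe u v

section Aux

variable {T : Type u} [PartialOrder T]

lemma tree_comp (hT : IsTreeOrder T) {x y z : T} (hy : y < x) (hz : z < x) :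
    y ≤ z ∨ z ≤ y := by
  haveI := hT x
  rcases @trichotomous {y : T // y < x} (· < ·) _ ⟨y, hy⟩ ⟨z, hz⟩ with h | h | h
  · exact Or.inl (le_of_lt h)
  · exact Or.inl (le_of_eq (congrArg Subtype.val h))
  · exact Or.inr (le_of_lt h)

lemma tree_least (hT : IsTreeOrder T) (x : T) (A : Set T) (hne : A.Nonempty)
    (hsub : A ⊆ Set.Iic x) : ∃ m ∈ A, ∀ a ∈ A, m ≤ a := by
  by_cases h : (A ∩ Set.Iio x).Nonempty
  · haveI := hT x
    have wf : WellFounded (fun a b : {y : T // y < x} => a < b) := IsWellFounded.wf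
    set A' : Set {y : T // y < x} := {y | (y : T) ∈ A} with hA'
    obtain ⟨a0, ha0A, ha0lt⟩ := h
    obtain ⟨m, hmA', hmin⟩ := wf.has_min A' ⟨⟨a0, ha0lt⟩, ha0A⟩
    refine ⟨m.1, hmA', fun a ha => ?_⟩
    by_cases hax : a < x
    · have hnlt : ¬ (⟨a, hax⟩ : {y : T // y < x}) < m := hmin ⟨a, hax⟩ ha
      rcases @trichotomous {y : T // y < x} (· < ·) _ m ⟨a, hax⟩ with h' | h' | h'
      · exact le_of_lt h'
      · exact le_of_eq (congrArg Subtype.val h')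
      · exact absurd h' hnlt
    · have hax' : a = x := (lt_or_eq_of_le (hsub ha)).resolve_left hax
      rw [hax']
      exact le_of_lt m.2
  · obtain ⟨a, ha⟩ := hne
    have key : ∀ b ∈ A, b = x := fun b hb => by
      by_contra hbx
      exact h ⟨b, hb, lt_of_le_of_ne (hsub hb) hbx⟩
    exact ⟨a, ha, fun b hb => (key a ha).symm ▸ (key b hb) ▸ le_refl x⟩

lemma tree_nbhd (hT : IsTreeOrder T) {s : T} (hpred : ∃ y, y < s) {U : Set T}
    (hU : TopologicalSpace.GenerateOpen
      ({u | ∃ a b : T, a < b ∧ u = Set.Ioc a b} ∪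
       {u | ∃ b : T, (∀ a : T, ¬a < b) ∧ u = {b}}) U)
    (hsU : s ∈ U) : ∃ a, a < s ∧ Set.Ioc a s ⊆ U := by
  induction hU with
  | basic V hV =>
    rcases hV with ⟨a, b, hab, rfl⟩ | ⟨b, hb, rfl⟩
    · exact ⟨a, hsU.1, fun z hz => ⟨hz.1, le_trans hz.2 hsU.2⟩⟩
    · obtain ⟨y, hy⟩ := hpred
      exact absurd (hsU ▸ hy : y < b) (hb y)
  | univ =>
    obtain ⟨y, hy⟩ := hpred
    exact ⟨y, hy, fun z _ => trivial⟩
  | inter V W hV hW ihV ihW =>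
    obtain ⟨a, ha, haV⟩ := ihV hsU.1
    obtain ⟨b, hb, hbW⟩ := ihW hsU.2
    rcases tree_comp hT ha hb with h | h
    · exact ⟨b, hb, fun z hz => ⟨haV ⟨lt_of_le_of_lt h hz.1, hz.2⟩, hbW hz⟩⟩
    · exact ⟨a, ha, fun z hz => ⟨haV hz, hbW ⟨lt_of_le_of_lt h hz.1, hz.2⟩⟩⟩
  | sUnion S hS ih =>
    obtain ⟨V, hVS, hsV⟩ := hsU
    obtain ⟨a, ha, haV⟩ := ih V hVS hsV
    exact ⟨a, ha, fun z hz => ⟨V, hVS, haV hz⟩⟩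

end Aux

/-- A closed discrete subset of a tree (with the order topology) is the
union of at most countably many antichains. -/
theorem closed_discrete_eq_countable_union_antichains {T : Type u} [PartialOrder T]
    [tT : TopologicalSpace T] (htop : tT = treeTopology T) (hT : IsTreeOrder T)
    (D : Set T) (hDcl : IsClosed D)
    (hDdisc : ∀ x ∈ D, ∃ U : Set T, IsOpen U ∧ x ∈ U ∧ U ∩ D = {x}) :
    ∃ A : ℕ → Set T, (∀ n, IsAntichain (· ≤ ·) (A n)) ∧ D = ⋃ n, A n := by
  -- Step 1: finitely many elements of D below any point
  have hfin : ∀ x : T, (D ∩ Set.Iio x).Finite := by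
    intro x
    by_contra hinf'
    have hinf : (D ∩ Set.Iio x).Infinite := hinf'
    set E : Set T := D ∩ Set.Iio x with hE
    set S : Set T := {z : T | z ≤ x ∧ (E ∩ Set.Iio z).Infinite} with hS
    have hxS : x ∈ S := by
      refine ⟨le_refl x, ?_⟩
      have : E ∩ Set.Iio x = E := by
        rw [hE, Set.inter_assoc, Set.inter_self]
      rw [this]; exact hinf
    obtain ⟨s, hsS, hmin⟩ := tree_least hT x S ⟨x, hxS⟩ (fun z hz => hz.1)
    have hpred : ∃ y, y < s := by
      obtain ⟨y, hy⟩ := hsS.2.nonempty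
      exact ⟨y, hy.2⟩
    -- every open set containing s meets D in a point other than s
    have hcl : ∀ U : Set T, IsOpen U → s ∈ U → ∃ w, w ∈ U ∩ D ∧ w ≠ s := by
      intro U hU hsU
      have hU' : TopologicalSpace.GenerateOpen
          ({u | ∃ a b : T, a < b ∧ u = Set.Ioc a b} ∪
           {u | ∃ b : T, (∀ a : T, ¬a < b) ∧ u = {b}}) U := by
        rw [htop] at hU; exact hU
      obtain ⟨a, ha, hsub⟩ := tree_nbhd hT hpred hU' hsU
      have haS : a ∉ S := fun haS => lt_irrefl s (lt_of_le_of_lt (hmin a haS) ha)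
      have hax : a ≤ x := le_of_lt (lt_of_lt_of_le ha hsS.1)
      have hafin : (E ∩ Set.Iio a).Finite := by
        by_contra h
        exact haS ⟨hax, h⟩
      have hdiff : ((E ∩ Set.Iio s) \ ((E ∩ Set.Iio a) ∪ {a})).Infinite :=
        hsS.2.diff (hafin.union (Set.finite_singleton a))
      obtain ⟨w, hw⟩ := hdiff.nonempty
      obtain ⟨⟨hwE, hws⟩, hwn⟩ := hw
      have hwa : ¬ w ≤ a := by
        intro hle
        rcases lt_or_eq_of_le hle with h' | h'
        · exact hwn (Or.inl ⟨hwE, h'⟩)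
        · exact hwn (Or.inr h')
      have haw : a < w := by
        rcases tree_comp hT hws ha with h' | h'
        · exact absurd h' hwa
        · exact lt_of_le_of_ne h' (fun he => hwa he.symm.le)
      exact ⟨w, ⟨hsub ⟨haw, le_of_lt hws⟩, hwE.1⟩, ne_of_lt hws⟩
    have hsD : s ∈ D := by
      have : s ∈ closure D := by
        rw [mem_closure_iff]
        intro U hU hsU
        obtain ⟨w, hw, _⟩ := hcl U hU hsU
        exact ⟨w, hw⟩
      rwa [hDcl.closure_eq] at this
    obtain ⟨U, hUo, hsU, hUD⟩ := hDdisc s hsD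
    obtain ⟨w, hw, hws⟩ := hcl U hUo hsU
    exact hws (by rwa [hUD] at hw)
  -- Step 2: color by the number of D-predecessors
  refine ⟨fun n => {x | x ∈ D ∧ (D ∩ Set.Iio x).ncard = n}, ?_, ?_⟩
  · intro n a ha b hb hne hle
    have hab : a < b := lt_of_le_of_ne hle hne
    have hss : D ∩ Set.Iio a ⊂ D ∩ Set.Iio b := by
      constructor
      · rintro z ⟨hz, hz'⟩
        exact ⟨hz, hz'.trans hab⟩
      · intro h
        exact lt_irrefl a (h ⟨ha.1, hab⟩).2
    have := Set.ncard_lt_ncard hss (hfin b)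
    rw [ha.2, hb.2] at this
    exact lt_irrefl n this
  · ext x
    simp only [Set.mem_iUnion, Set.mem_setOf_eq]
    exact ⟨fun hx => ⟨(D ∩ Set.Iio x).ncard, hx, rfl⟩, fun ⟨n, hx, _⟩ => hx⟩
end
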